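/- Assume Cramér's conjecture: p_{n+1} - p_n = O(log² p_n). Assume also Littlewood's oscillation theorem: there exist C > 0 and infinitely many n with θ(p_n) > p_n + C√(p_n) · log log log p_n. Then the inequality u_n > u_{n+1} for u_n = N_n / (φ(N_n) · log log N_n) is violated for infinitely many n. -/

import Mathlib

open Filter Topology Finset Real

/-- the k-th prime (1-indexed): `prim 1 = 2`. -/
noncomputable def prim (k : ℕ) : ℕ := Nat.nth Nat.Prime (k - 1)

/-- the primorial of order `n`: the product of the first `n` primes. -/
noncomputable def primorialN (n : ℕ) : ℕ := ∏ k ∈ Finset.Icc 1 n, prim k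

/-- Chebyshev's first summatory function `θ(x) = ∑_{p ≤ x} log p`. -/
noncomputable def cheb (x : ℝ) : ℝ :=
  ∑ q ∈ Finset.filter Nat.Prime (Finset.Iic ⌊x⌋₊), Real.log q

/-- the Nicolas ratio `u n = N_n / (φ(N_n) log log N_n)`. -/
noncomputable def u (n : ℕ) : ℝ :=
  (primorialN n : ℝ) / (Nat.totient (primorialN n) * Real.log (Real.log (primorialN n)))

/-- the Dedekind `Ψ` function (real-valued). -/
noncomputable def psi (n : ℕ) : ℝ := n * ∏ p ∈ n.primeFactors, (1 + 1 / (p : ℝ))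

/-- the ratio `v n = Ψ(N_n)/(N_n log log N_n)`. -/
noncomputable def v (n : ℕ) : ℝ :=
  psi (primorialN n) / (primorialN n * Real.log (Real.log (primorialN n)))

/-!
Write `N = N_n`, `p = p_{n+1}` and `T = log N = θ(p_n)`. The identities `N_{n+1} = N p` and
`φ(N_{n+1}) = φ(N) (p - 1)` turn `u_n ≤ u_{n+1}` into `(p - 1) log (T + log p) ≤ p log T`, and
since `log (T + log p) ≤ log T + log p / T` it suffices that `(p - 1) log p ≤ T log T`.
Cramér's conjecture gives `p ≤ x + D (log x)²` for `x = p_n`, hence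
`p log p ≤ x log x + O((log x)³)`, while for Littlewood's `n` we have `T ≥ x + C √x`, so
`T log T ≥ x log x + C √x log x`, which wins for large `x`.
-/

theorem Nat.filter_Iic_nth_eq_image_range {p : ℕ → Prop} [DecidablePred p]
    (hp : (Set.ofPred p).Infinite) (m : ℕ) :
    {x ∈ Iic (Nat.nth p m) | p x} = (range (m + 1)).image (Nat.nth p) := by
  ext x
  simp only [mem_filter, mem_Iic, mem_image, mem_range]
  constructor
  · rintro ⟨hx, hpx⟩
    refine ⟨Nat.count p x, ?_, Nat.nth_count hpx⟩
    rw [← Nat.nth_count hpx, Nat.nth_le_nth hp] at hx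
    omega
  · rintro ⟨i, hi, rfl⟩
    exact ⟨(Nat.nth_le_nth hp).2 (by omega), Nat.nth_mem_of_infinite hp i⟩

theorem prim_succ (n : ℕ) : prim (n + 1) = Nat.nth Nat.Prime n := rfl

theorem prim_prime (k : ℕ) : (prim k).Prime := Nat.prime_nth_prime _

theorem prim_lt_prim_succ {n : ℕ} (hn : 1 ≤ n) : prim n < prim (n + 1) := by
  obtain ⟨m, rfl⟩ : ∃ m, n = m + 1 := ⟨n - 1, by omega⟩
  exact Nat.nth_strictMono Nat.infinite_setOfPred_prime (Nat.lt_succ_self m)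

theorem tendsto_prim_atTop : Tendsto (fun n ↦ (prim n : ℝ)) atTop atTop :=
  tendsto_natCast_atTop_atTop.comp <|
    (Nat.nth_strictMono Nat.infinite_setOfPred_prime).tendsto_atTop.comp
      (tendsto_sub_atTop_nat 1)

theorem primorialN_eq_prod_range (n : ℕ) :
    primorialN n = ∏ i ∈ range n, Nat.nth Nat.Prime i := by
  induction n with
  | zero => rfl
  | succ n ih =>
    rw [primorialN, prod_Icc_succ_top (by omega), ← primorialN, ih, prod_range_succ, prim_succ]

theorem primorialN_succ (n : ℕ) : primorialN (n + 1) = primorialN n * prim (n + 1) := by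
  rw [primorialN_eq_prod_range, primorialN_eq_prod_range, prod_range_succ, prim_succ]

theorem primorialN_pos (n : ℕ) : 0 < primorialN n := by
  rw [primorialN_eq_prod_range]
  exact prod_pos fun i _ ↦ (Nat.prime_nth_prime i).pos

theorem totient_primorialN_succ (n : ℕ) :
    (primorialN (n + 1)).totient = (primorialN n).totient * (prim (n + 1) - 1) := by
  have hcop : (primorialN n).Coprime (prim (n + 1)) := by
    rw [primorialN_eq_prod_range]
    refine Nat.Coprime.prod_left fun i hi ↦ (Nat.coprime_primes (Nat.prime_nth_prime i)
      (prim_prime _)).2 (Nat.nth_strictMono Nat.infinite_setOfPred_prime (mem_range.1 hi)).ne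
  rw [primorialN_succ, Nat.totient_mul hcop, Nat.totient_prime (prim_prime _)]

theorem cheb_prim {n : ℕ} (hn : 1 ≤ n) : cheb (prim n) = log (primorialN n) := by
  obtain ⟨m, rfl⟩ : ∃ m, n = m + 1 := ⟨n - 1, by omega⟩
  rw [cheb, prim_succ, Nat.floor_natCast,
    Nat.filter_Iic_nth_eq_image_range Nat.infinite_setOfPred_prime,
    sum_image fun _ _ _ _ h ↦ Nat.nth_injective Nat.infinite_setOfPred_prime h,
    primorialN_eq_prod_range, Nat.cast_prod,
    log_prod fun i _ ↦ mod_cast (Nat.prime_nth_prime i).ne_zero]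

theorem log_add_le_log_add_div {x y : ℝ} (hx : 0 < x) (hy : 0 ≤ y) :
    log (x + y) ≤ log x + y / x := by
  have h := log_le_sub_one_of_pos (div_pos (add_pos_of_pos_of_nonneg hx hy) hx)
  rw [log_div (by positivity) hx.ne', add_div, div_self hx.ne'] at h
  linarith

theorem sub_one_mul_log_add_log_le {p T : ℝ} (hp : 1 ≤ p) (hT : 0 < T)
    (h : (p - 1) * log p ≤ T * log T) :
    (p - 1) * log (T + log p) ≤ p * log T := by
  have hdiv : (p - 1) * log p / T ≤ log T := by rwa [div_le_iff₀ hT, mul_comm (log T)]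
  calc (p - 1) * log (T + log p) ≤ (p - 1) * (log T + log p / T) :=
        mul_le_mul_of_nonneg_left (log_add_le_log_add_div hT (log_nonneg hp)) (by linarith)
    _ = (p - 1) * log T + (p - 1) * log p / T := by ring
    _ ≤ p * log T := by linarith

theorem eventually_log_sq_le_mul_sqrt {ε : ℝ} (hε : 0 < ε) :
    ∀ᶠ x : ℝ in atTop, log x ^ 2 ≤ ε * √x := by
  filter_upwards [(isLittleO_log_rpow_rpow_atTop 2 (by norm_num : (0 : ℝ) < 1 / 2)).bound hε,
    eventually_ge_atTop 1] with x hx hx1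
  rwa [norm_of_nonneg (rpow_nonneg (log_nonneg hx1) _), rpow_two,
    norm_of_nonneg (rpow_nonneg (by linarith) _), ← sqrt_eq_rpow] at hx

theorem eventually_add_mul_log_sq_mul_log_le {C D : ℝ} (hC : 0 < C) (hD : 0 ≤ D) :
    ∀ᶠ x : ℝ in atTop,
      (x + D * log x ^ 2) * log (x + D * log x ^ 2) ≤ (x + C * √x) * log x := by
  filter_upwards [eventually_ge_atTop (exp 1),
    eventually_log_sq_le_mul_sqrt (ε := C / (3 * (D + 1))) (by positivity),
    isLittleO_log_id_atTop.bound (c := 1 / (D + 1)) (by positivity)] with x hx hsq hlin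
  have hx0 : 0 < x := (exp_pos 1).trans_le hx
  set L := log x
  have hL : 1 ≤ L := (le_log_iff_exp_le hx0).2 hx
  have hDL : D * L ≤ x := by
    rw [norm_of_nonneg (by linarith), id, norm_of_nonneg hx0.le, one_div_mul_eq_div,
      le_div_iff₀ (by linarith)] at hlin
    nlinarith
  have h3 : 3 * (D * L ^ 2) ≤ C * √x := by
    rw [div_mul_eq_mul_div, le_div_iff₀ (by positivity)] at hsq
    nlinarith [sq_nonneg L, sqrt_nonneg x]
  set a := D * L ^ 2
  have ha : 0 ≤ a := by positivity
  have hax : a / x ≤ L := by rw [div_le_iff₀ hx0]; nlinarith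
  calc (x + a) * log (x + a) ≤ (x + a) * (L + a / x) := by
        gcongr; exact log_add_le_log_add_div hx0 ha
    _ = x * L + a + a * L + a * (a / x) := by field_simp; ring
    _ ≤ x * L + 3 * a * L := by nlinarith [mul_le_mul_of_nonneg_left hax ha]
    _ ≤ (x + C * √x) * L := by nlinarith

theorem u_le_u_succ_of {n : ℕ} (hT : 1 < log (primorialN n))
    (h : ((prim (n + 1) : ℝ) - 1) * log (log (primorialN n) + log (prim (n + 1)))
      ≤ prim (n + 1) * log (log (primorialN n))) :
    u n ≤ u (n + 1) := by
  have hN : (0 : ℝ) < primorialN n := mod_cast primorialN_pos n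
  have hΦ : (0 : ℝ) < (primorialN n).totient := mod_cast Nat.totient_pos.2 (primorialN_pos n)
  have hp : (1 : ℝ) < prim (n + 1) := mod_cast (prim_prime _).one_lt
  have hu : u (n + 1) = primorialN n * prim (n + 1) / ((primorialN n).totient *
      (prim (n + 1) - 1) * log (log (primorialN n) + log (prim (n + 1)))) := by
    rw [u, totient_primorialN_succ, primorialN_succ, Nat.cast_mul, Nat.cast_mul,
      Nat.cast_sub (prim_prime _).one_le, Nat.cast_one, log_mul hN.ne' (by positivity)]
  rw [u, hu]
  generalize (primorialN n : ℝ) = N at *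
  generalize ((primorialN n).totient : ℝ) = Φ at *
  generalize (prim (n + 1) : ℝ) = p at *
  have hlogT' : 0 < log (log N + log p) := log_pos (by linarith [log_pos hp])
  rw [div_le_div_iff₀ (mul_pos hΦ (log_pos hT)) (mul_pos (mul_pos hΦ (by linarith)) hlogT')]
  calc N * (Φ * (p - 1) * log (log N + log p))
      = N * Φ * ((p - 1) * log (log N + log p)) := by ring
    _ ≤ N * Φ * (p * log (log N)) := by gcongr
    _ = N * p * (Φ * log (log N)) := by ring

theorem u_le_u_succ_of_cheb_ge {n : ℕ} {C D : ℝ} (hn : 1 ≤ n) (hC : 0 ≤ C)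
    (hx : 3 ≤ (prim n : ℝ))
    (hgap : (prim (n + 1) : ℝ) ≤ prim n + D * log (prim n) ^ 2)
    (hbig : (prim n + D * log (prim n) ^ 2) * log (prim n + D * log (prim n) ^ 2)
      ≤ (prim n + C * √(prim n)) * log (prim n))
    (hθ : prim n + C * √(prim n) ≤ cheb (prim n)) :
    u n ≤ u (n + 1) := by
  rw [cheb_prim hn] at hθ
  set x : ℝ := ((prim n : ℕ) : ℝ)
  set p : ℝ := ((prim (n + 1) : ℕ) : ℝ)
  set T := log (primorialN n)
  have hxp : x < p := Nat.cast_lt.2 (prim_lt_prim_succ hn)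
  have hxT : x ≤ T := by nlinarith [sqrt_nonneg x]
  have hlogp : 0 ≤ log p := log_nonneg (by linarith)
  have hA : (p - 1) * log p ≤ T * log T :=
    calc (p - 1) * log p ≤ p * log p := by nlinarith
      _ ≤ (x + D * log x ^ 2) * log (x + D * log x ^ 2) :=
        mul_le_mul hgap (log_le_log (by linarith) hgap) hlogp (by linarith)
      _ ≤ (x + C * √x) * log x := hbig
      _ ≤ T * log T :=
        mul_le_mul hθ (log_le_log (by linarith) hxT) (log_nonneg (by linarith)) (by linarith)
  exact u_le_u_succ_of (by linarith) (sub_one_mul_log_add_log_le (by linarith) (by linarith) hA)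

theorem stmt6
    (hCramer : ∃ D : ℝ, ∀ᶠ n : ℕ in Filter.atTop,
      (prim (n + 1) : ℝ) - prim n ≤ D * (Real.log (prim n)) ^ 2)
    (hLittlewood : ∃ C : ℝ, 0 < C ∧
      {n : ℕ | cheb (prim n) >
        (prim n : ℝ) + C * Real.sqrt (prim n) *
          Real.log (Real.log (Real.log (prim n)))}.Infinite) :
    {n : ℕ | ¬ u n > u (n + 1)}.Infinite := by
  obtain ⟨D₀, hCramer⟩ := hCramer
  obtain ⟨C, hC, hLittlewood⟩ := hLittlewood
  set D := max D₀ 0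
  have hlarge : ∀ᶠ x : ℝ in atTop, 3 ≤ x ∧ 1 ≤ log (log (log x)) ∧
      (x + D * log x ^ 2) * log (x + D * log x ^ 2) ≤ (x + C * √x) * log x :=
    (eventually_ge_atTop 3).and <|
      ((tendsto_log_atTop.comp (tendsto_log_atTop.comp tendsto_log_atTop)).eventually_ge_atTop
        1).and (eventually_add_mul_log_sq_mul_log_le hC (le_max_right _ _))
  have hgood := (eventually_ge_atTop 1).and (hCramer.and (tendsto_prim_atTop.eventually hlarge))
  rw [← Nat.frequently_atTop_iff_infinite] at hLittlewood ⊢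
  refine (hLittlewood.and_eventually hgood).mono ?_
  rintro n ⟨hθ, hn, hgap, hx, hlll, hbig⟩
  refine not_lt.2 (u_le_u_succ_of_cheb_ge hn hC.le hx ?_ hbig ?_)
  · nlinarith [le_max_left D₀ 0, sq_nonneg (log (prim n))]
  · linarith [le_mul_of_one_le_right (mul_nonneg hC.le (sqrt_nonneg (prim n : ℝ))) hlll]
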